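/- arXiv:2302.10577 — 3 statements merged into one kernel-verified Lean document; each statement's English description precedes it below -/
import Mathlib

section
/- Let H be a k-regular graph of girth at least 7 and let G be obtained from H by attaching ℓ ≥ 0 leaves to each vertex of H. For a vertex v of H and a neighbor u of v in H, define B_u to be the set of all vertices of G at distance at most 2 from u in G, excluding the vertices in N_G[v] \ {u}. Then for distinct neighbors u, u' of v in H, the sets B_u and B_{u'} are disjoint. -/
/-- Attach `ℓ` new pendant leaves to every vertex of `H`. -/
def attachLeaves {V : Type*} (H : SimpleGraph V) (ℓ : ℕ) :
    SimpleGraph (V ⊕ V × Fin ℓ) :=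
  SimpleGraph.fromRel (fun a b =>
    match a, b with
    | Sum.inl u, Sum.inl v => H.Adj u v
    | Sum.inl u, Sum.inr w => u = w.1
    | _, _ => False)

/-- `B_x` (relative to the vertex `v`): all vertices of `G` at distance at most
`2` from `x`, excluding the vertices of `N_G[v] \ {x}`. -/
def ballMinus {W : Type*} (G : SimpleGraph W) (v x : W) : Set W :=
  {w | G.Reachable w x ∧ G.dist w x ≤ 2} \ ((G.neighborSet v ∪ {v}) \ {x})

open SimpleGraph

@[simp] lemma attachLeaves_adj_inl_inl {V : Type*} {H : SimpleGraph V} {ℓ : ℕ} {a b : V} :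
    (attachLeaves H ℓ).Adj (Sum.inl a) (Sum.inl b) ↔ H.Adj a b := by
  constructor
  · rintro ⟨-, h | h⟩
    · exact h
    · exact h.symm
  · intro h
    exact ⟨by simpa using h.ne, Or.inl h⟩

@[simp] lemma attachLeaves_adj_inl_inr {V : Type*} {H : SimpleGraph V} {ℓ : ℕ} {a : V}
    {w : V × Fin ℓ} : (attachLeaves H ℓ).Adj (Sum.inl a) (Sum.inr w) ↔ a = w.1 := by
  simp [attachLeaves]

@[simp] lemma attachLeaves_adj_inr_inl {V : Type*} {H : SimpleGraph V} {ℓ : ℕ} {a : V}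
    {w : V × Fin ℓ} : (attachLeaves H ℓ).Adj (Sum.inr w) (Sum.inl a) ↔ a = w.1 := by
  simp [attachLeaves]

@[simp] lemma attachLeaves_adj_inr_inr {V : Type*} {H : SimpleGraph V} {ℓ : ℕ}
    {w w' : V × Fin ℓ} : ¬ (attachLeaves H ℓ).Adj (Sum.inr w) (Sum.inr w') := by
  simp [attachLeaves]

lemma no3 {V : Type*} {H : SimpleGraph V} (hg : 7 ≤ H.egirth)
    {a b c : V} (hab : H.Adj a b) (hbc : H.Adj b c) (hca : H.Adj c a) : False := by
  have hc : (Walk.cons hab (Walk.cons hbc (Walk.cons hca Walk.nil))).IsCycle := by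
    simp [Walk.isCycle_def, Walk.isTrail_def, hab.ne, hbc.ne, hca.ne, hab.ne', hbc.ne', hca.ne']
  have := le_egirth.mp hg a _ hc
  simp only [Walk.length_cons, Walk.length_nil] at this
  exact absurd this (by norm_num)

lemma no4 {V : Type*} {H : SimpleGraph V} (hg : 7 ≤ H.egirth)
    {a b c d : V} (hab : H.Adj a b) (hbc : H.Adj b c) (hcd : H.Adj c d) (hda : H.Adj d a)
    (hac : a ≠ c) (hbd : b ≠ d) : False := by
  have hc : (Walk.cons hab (Walk.cons hbc (Walk.cons hcd (Walk.cons hda Walk.nil)))).IsCycle := by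
    simp_all [Walk.isCycle_def, Walk.isTrail_def, hab.ne, hbc.ne, hcd.ne, hda.ne,
      hab.ne', hbc.ne', hcd.ne', hda.ne', hac, hbd, Ne.symm hac, Ne.symm hbd, Sym2.eq_iff]
  have := le_egirth.mp hg a _ hc
  simp only [Walk.length_cons, Walk.length_nil] at this
  exact absurd this (by norm_num)

lemma no5 {V : Type*} {H : SimpleGraph V} (hg : 7 ≤ H.egirth)
    {a b c d e : V} (hab : H.Adj a b) (hbc : H.Adj b c) (hcd : H.Adj c d) (hde : H.Adj d e)
    (hea : H.Adj e a)
    (hac : a ≠ c) (had : a ≠ d) (hbd : b ≠ d) (hbe : b ≠ e) (hce : c ≠ e) : False := by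
  have hc : (Walk.cons hab (Walk.cons hbc (Walk.cons hcd (Walk.cons hde
      (Walk.cons hea Walk.nil))))).IsCycle := by
    simp_all [Walk.isCycle_def, Walk.isTrail_def, hab.ne, hbc.ne, hcd.ne, hde.ne, hea.ne,
      hab.ne', hbc.ne', hcd.ne', hde.ne', hea.ne',
      Ne.symm hac, Ne.symm had, Ne.symm hbd, Ne.symm hbe, Ne.symm hce, Sym2.eq_iff]
  have := le_egirth.mp hg a _ hc
  simp only [Walk.length_cons, Walk.length_nil] at this
  exact absurd this (by norm_num)

lemma no6 {V : Type*} {H : SimpleGraph V} (hg : 7 ≤ H.egirth)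
    {a b c d e f : V} (hab : H.Adj a b) (hbc : H.Adj b c) (hcd : H.Adj c d) (hde : H.Adj d e)
    (hef : H.Adj e f) (hfa : H.Adj f a)
    (hac : a ≠ c) (had : a ≠ d) (hae : a ≠ e) (hbd : b ≠ d) (hbe : b ≠ e) (hbf : b ≠ f)
    (hce : c ≠ e) (hcf : c ≠ f) (hdf : d ≠ f) : False := by
  have hc : (Walk.cons hab (Walk.cons hbc (Walk.cons hcd (Walk.cons hde
      (Walk.cons hef (Walk.cons hfa Walk.nil)))))).IsCycle := by
    simp_all [Walk.isCycle_def, Walk.isTrail_def, hab.ne, hbc.ne, hcd.ne, hde.ne, hef.ne, hfa.ne,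
      hab.ne', hbc.ne', hcd.ne', hde.ne', hef.ne', hfa.ne',
      Ne.symm hac, Ne.symm had, Ne.symm hae, Ne.symm hbd, Ne.symm hbe, Ne.symm hbf,
      Ne.symm hce, Ne.symm hcf, Ne.symm hdf, Sym2.eq_iff]
  have := le_egirth.mp hg a _ hc
  simp only [Walk.length_cons, Walk.length_nil] at this
  exact absurd this (by norm_num)

/-- Decode a walk of length at most 2. -/
lemma walk_le_two {W : Type*} {G : SimpleGraph W} {s t : W} (p : G.Walk s t)
    (hp : p.length ≤ 2) :
    s = t ∨ G.Adj s t ∨ ∃ m, G.Adj s m ∧ G.Adj m t := by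
  match p with
  | Walk.nil => exact Or.inl rfl
  | Walk.cons h Walk.nil => exact Or.inr (Or.inl h)
  | Walk.cons h (Walk.cons h' q) =>
    cases q with
    | nil => exact Or.inr (Or.inr ⟨_, h, h'⟩)
    | cons h'' q' => simp only [Walk.length_cons] at hp; omega

/-- Decode membership of an `H`-vertex in a ball of radius 2 around an `H`-vertex. -/
lemma mem_ball_decode {V : Type*} {H : SimpleGraph V} {ℓ : ℕ} {x y : V}
    (hr : (attachLeaves H ℓ).Reachable (Sum.inl x) (Sum.inl y))
    (hd : (attachLeaves H ℓ).dist (Sum.inl x) (Sum.inl y) ≤ 2) :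
    x = y ∨ H.Adj x y ∨ ∃ a, H.Adj x a ∧ H.Adj a y := by
  obtain ⟨p, hp⟩ := hr.exists_walk_length_eq_dist
  rcases walk_le_two p (hp ▸ hd) with h | h | ⟨m, h1, h2⟩
  · exact Or.inl (by simpa using h)
  · exact Or.inr (Or.inl (by simpa using h))
  · match m with
    | Sum.inl a => exact Or.inr (Or.inr ⟨a, by simpa using h1, by simpa using h2⟩)
    | Sum.inr w =>
      left
      have hx : x = w.1 := by simpa using h1
      have hy : y = w.1 := by simpa using h2
      rw [hx, hy]

/-- Decode membership of a leaf in a ball of radius 2 around an `H`-vertex. -/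
lemma mem_ball_leaf_decode {V : Type*} {H : SimpleGraph V} {ℓ : ℕ} {w : V × Fin ℓ} {y : V}
    (hr : (attachLeaves H ℓ).Reachable (Sum.inr w) (Sum.inl y))
    (hd : (attachLeaves H ℓ).dist (Sum.inr w) (Sum.inl y) ≤ 2) :
    w.1 = y ∨ H.Adj w.1 y := by
  obtain ⟨p, hp⟩ := hr.exists_walk_length_eq_dist
  rcases walk_le_two p (hp ▸ hd) with h | h | ⟨m, h1, h2⟩
  · exact absurd h (by simp)
  · left
    have : y = w.1 := by simpa using h
    exact this.symm
  · match m with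
    | Sum.inl a =>
      have ha : a = w.1 := by simpa using h1
      exact Or.inr (by rw [← ha]; simpa using h2)
    | Sum.inr w' => exact absurd h1 (by simp)

/-- for a `k`-regular graph `H` of girth at least `7` with `ℓ ≥ 0`
leaves attached at every vertex, and distinct `H`-neighbors `u, u'` of a vertex
`v` of `H`, the sets `B_u` and `B_{u'}` are disjoint. -/
theorem stmt7 {V : Type*} (H : SimpleGraph V) (k ℓ : ℕ)
    (hgirth : 7 ≤ H.egirth) (hreg : ∀ v, (H.neighborSet v).ncard = k)
    (v u u' : V) (hu : H.Adj v u) (hu' : H.Adj v u') (hne : u ≠ u') :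
    Disjoint (ballMinus (attachLeaves H ℓ) (Sum.inl v) (Sum.inl u))
      (ballMinus (attachLeaves H ℓ) (Sum.inl v) (Sum.inl u')) := by
  rw [Set.disjoint_left]
  rintro w ⟨⟨hr1, hd1⟩, hx1⟩ ⟨⟨hr2, hd2⟩, hx2⟩
  simp only [Set.mem_diff, Set.mem_union, Set.mem_singleton_iff, mem_neighborSet,
    not_and, not_not] at hx1 hx2
  match w with
  | Sum.inr c =>
    -- `w` is a leaf attached at `c.1`
    have hb1 := mem_ball_leaf_decode hr1 hd1
    have hb2 := mem_ball_leaf_decode hr2 hd2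
    -- the leaf is not attached at `v`
    have hcv : c.1 ≠ v := by
      intro h
      have : (Sum.inr c : V ⊕ V × Fin ℓ) = Sum.inl u :=
        hx1 (Or.inl (by simp [h.symm]))
      exact absurd this (by simp)
    rcases hb1 with h1 | h1 <;> rcases hb2 with h2 | h2
    · exact hne (h1 ▸ h2)
    · exact no3 hgirth hu (h1 ▸ h2) hu'.symm
    · exact no3 hgirth hu' (h2 ▸ h1) hu.symm
    · exact no4 hgirth hu h1.symm h2 hu'.symm (Ne.symm hcv) hne
  | Sum.inl x =>
    -- `x` is not in the closed neighborhood of `v`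
    have hxv : ¬ (H.Adj v x ∨ x = v) := by
      intro h
      have h1 : x = u := by
        have := hx1 (by rcases h with h | h; · exact Or.inl (by simpa using h)
                        · exact Or.inr (by rw [h]))
        simpa using this
      have h2 : x = u' := by
        have := hx2 (by rcases h with h | h; · exact Or.inl (by simpa using h)
                        · exact Or.inr (by rw [h]))
        simpa using this
      exact hne (h1 ▸ h2)
    push_neg at hxv
    obtain ⟨hvx, hxvne⟩ := hxv
    have hxu : x ≠ u := fun h => hvx (h ▸ hu)
    have hxu' : x ≠ u' := fun h => hvx (h ▸ hu')
    have hb1 := mem_ball_decode hr1 hd1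
    have hb2 := mem_ball_decode hr2 hd2
    rcases hb1 with h1 | h1 | ⟨a, ha1, ha2⟩
    · exact hxu h1
    · rcases hb2 with h2 | h2 | ⟨b, hb1', hb2'⟩
      · exact hxu' h2
      · -- square v - u - x - u'
        exact no4 hgirth hu h1.symm h2 hu'.symm hxvne.symm hne
      · -- pentagon v - u - x - b - u'
        have hvb : v ≠ b := fun h => hvx (by rw [h]; exact hb1'.symm)
        have hub : u ≠ b := fun h => no3 hgirth hu (h ▸ hb2') hu'.symm
        exact no5 hgirth hu h1.symm hb1' hb2' hu'.symm hxvne.symm hvb hub hne hxu'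
    · rcases hb2 with h2 | h2 | ⟨b, hb1', hb2'⟩
      · exact hxu' h2
      · -- pentagon v - u' - x - a - u (reversed)
        have hva : v ≠ a := fun h => hvx (by rw [h]; exact ha1.symm)
        have hua' : u' ≠ a := fun h => no3 hgirth hu' (h ▸ ha2) hu.symm
        exact no5 hgirth hu' h2.symm ha1 ha2 hu.symm hxvne.symm hva hua' hne.symm hxu
      · have hva : v ≠ a := fun h => hvx (by rw [h]; exact ha1.symm)
        have hvb : v ≠ b := fun h => hvx (by rw [h]; exact hb1'.symm)
        by_cases hab : a = b
        · -- square v - u - a - u'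
          subst hab
          exact no4 hgirth hu ha2.symm hb2' hu'.symm hva hne
        · -- hexagon v - u - a - x - b - u'
          have hua' : a ≠ u' := fun h => no3 hgirth hu' (h ▸ ha2) hu.symm
          have hub : u ≠ b := fun h => no3 hgirth hu (h ▸ hb2') hu'.symm
          exact no6 hgirth hu ha2.symm ha1.symm hb1' hb2' hu'.symm
            hva hxvne.symm hvb hxu.symm hub hne hab hua' hxu'
end

section
/- For every even r ≥ 2 there exists an r-regular graph with girth at least 5. -/
-- girth lemma: no 3- or 4-cycles implies egirth >= 5
lemma aux_girth {V : Type*} (G : SimpleGraph V)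
    (h3 : ∀ a b c, G.Adj a b → G.Adj b c → G.Adj c a → False)
    (h4 : ∀ a b c d, G.Adj a b → G.Adj b c → G.Adj c d → G.Adj d a → a ≠ c → b ≠ d → False) :
    5 ≤ G.egirth := by
  rw [SimpleGraph.le_egirth]
  intro a w hw
  by_contra hlt
  push_neg at hlt
  have hlt' : w.length < 5 := by exact_mod_cast hlt
  have h3l := hw.three_le_length
  clear hlt
  interval_cases h : w.length
  · -- length 3
    cases w with
    | nil => simp at h
    | cons h1 w =>
      cases w with
      | nil => simp at h
      | cons h2 w =>
        cases w with
        | nil => simp at h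
        | cons h3' w =>
          cases w with
          | nil => exact h3 _ _ _ h1 h2 h3'
          | cons h4' w => simp [SimpleGraph.Walk.length_cons] at h
  · -- length 4
    cases w with
    | nil => simp at h
    | cons h1 w =>
      cases w with
      | nil => simp at h
      | cons h2 w =>
        cases w with
        | nil => simp at h
        | cons h3' w =>
          cases w with
          | nil => simp at h
          | cons h4' w =>
            cases w with
            | nil =>
              -- vertices a b c d, need a ≠ c, b ≠ d from cycle
              rename_i b c d
              have hs := hw.2
              simp [SimpleGraph.Walk.support_cons, List.nodup_cons] at hs
              exact h4 a b c d h1 h2 h3' h4' (by tauto) (by tauto)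
            | cons h5 w => simp [SimpleGraph.Walk.length_cons] at h

abbrev Vt (r : ℕ) := (Fin r × ZMod (r*r+1)) ⊕ (Fin r × ZMod (r*r+1))

def Gr (r : ℕ) : SimpleGraph (Vt r) where
  Adj u v := match u, v with
    | Sum.inl p, Sum.inr l => p.2 = (l.1.val : ZMod (r*r+1)) * (p.1.val : ZMod (r*r+1)) + l.2
    | Sum.inr l, Sum.inl p => p.2 = (l.1.val : ZMod (r*r+1)) * (p.1.val : ZMod (r*r+1)) + l.2
    | _, _ => False
  symm := ⟨by rintro (p|l) (q|m) h <;> exact h⟩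
  loopless := ⟨by rintro (p|l) h <;> exact h⟩

lemma Gr_adj_pl (r : ℕ) (p l : Fin r × ZMod (r*r+1)) :
    (Gr r).Adj (Sum.inl p) (Sum.inr l) ↔
      p.2 = (l.1.val : ZMod (r*r+1)) * (p.1.val : ZMod (r*r+1)) + l.2 := Iff.rfl

lemma Gr_adj_lp (r : ℕ) (p l : Fin r × ZMod (r*r+1)) :
    (Gr r).Adj (Sum.inr l) (Sum.inl p) ↔
      p.2 = (l.1.val : ZMod (r*r+1)) * (p.1.val : ZMod (r*r+1)) + l.2 := Iff.rfl

lemma Gr_adj_pp (r : ℕ) (p q : Fin r × ZMod (r*r+1)) :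
    ¬ (Gr r).Adj (Sum.inl p) (Sum.inl q) := fun h => h

lemma Gr_adj_ll (r : ℕ) (p q : Fin r × ZMod (r*r+1)) :
    ¬ (Gr r).Adj (Sum.inr p) (Sum.inr q) := fun h => h

-- key number theory: (m1-m2)(x1-x2) ≠ 0 in ZMod (r*r+1) for distinct m's, x's in Fin r
lemma aux_nz (r : ℕ) (m1 m2 x1 x2 : Fin r) (hm : m1 ≠ m2) (hx : x1 ≠ x2) :
    ((m1.val : ZMod (r*r+1)) - (m2.val : ZMod (r*r+1))) *
      ((x1.val : ZMod (r*r+1)) - (x2.val : ZMod (r*r+1))) ≠ 0 := by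
  set n := r*r+1
  have key : (((((m1.val : ℤ) - m2.val) * ((x1.val : ℤ) - x2.val)) : ℤ) : ZMod n)
      = ((m1.val : ZMod n) - (m2.val : ZMod n)) * ((x1.val : ZMod n) - (x2.val : ZMod n)) := by
    push_cast; ring
  rw [← key]
  intro h
  rw [ZMod.intCast_zmod_eq_zero_iff_dvd] at h
  have hm' : (m1.val : ℤ) - m2.val ≠ 0 := by
    intro h; apply hm; apply Fin.ext; omega
  have hx' : (x1.val : ℤ) - x2.val ≠ 0 := by
    intro h; apply hx; apply Fin.ext; omega
  have hne : ((m1.val : ℤ) - m2.val) * ((x1.val : ℤ) - x2.val) ≠ 0 := mul_ne_zero hm' hx'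
  have hle := Int.le_of_dvd (abs_pos.2 hne) ((dvd_abs _ _).2 h)
  have b1 : |(m1.val : ℤ) - m2.val| < r := by
    have := m1.isLt; have := m2.isLt; rw [abs_lt]; omega
  have b2 : |(x1.val : ℤ) - x2.val| < r := by
    have := x1.isLt; have := x2.isLt; rw [abs_lt]; omega
  have habs : |((m1.val : ℤ) - m2.val) * ((x1.val : ℤ) - x2.val)| < (r:ℤ) * r := by
    rw [abs_mul]
    exact mul_lt_mul'' b1 b2 (abs_nonneg _) (abs_nonneg _)
  have hn : (n : ℤ) = (r:ℤ)*(r:ℤ)+1 := by push_cast [n]; ring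
  set A := |((m1.val : ℤ) - m2.val) * ((x1.val : ℤ) - x2.val)| with hA
  omega

lemma Gr_tri_free (r : ℕ) : ∀ a b c, (Gr r).Adj a b → (Gr r).Adj b c → (Gr r).Adj c a → False := by
  rintro (a|a) (b|b) (c|c) h1 h2 h3 <;> first | exact h1 | exact h2 | exact h3

lemma Gr_c4_free (r : ℕ) : ∀ a b c d, (Gr r).Adj a b → (Gr r).Adj b c → (Gr r).Adj c d →
    (Gr r).Adj d a → a ≠ c → b ≠ d → False := by
  have main : ∀ (p1 : Fin r × ZMod (r*r+1)) (l2 : Fin r × ZMod (r*r+1)) p3 l4,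
      (Gr r).Adj (Sum.inl p1) (Sum.inr l2) → (Gr r).Adj (Sum.inr l2) (Sum.inl p3) →
      (Gr r).Adj (Sum.inl p3) (Sum.inr l4) → (Gr r).Adj (Sum.inr l4) (Sum.inl p1) →
      p1 ≠ p3 → l2 ≠ l4 → False := by
    intro p1 l2 p3 l4 h1 h2 h3 h4 hp hl
    rw [Gr_adj_pl] at h1 h3
    rw [Gr_adj_lp] at h2 h4
    by_cases hm : l2.1 = l4.1
    · -- then l2.2 = l4.2
      apply hl
      have h' := h1.symm.trans h4
      rw [hm] at h'
      exact Prod.ext hm (add_left_cancel h')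
    · by_cases hx : p1.1 = p3.1
      · apply hp
        have : p1.2 = p3.2 := by rw [h1, h2, hx]
        exact Prod.ext hx this
      · -- (m2 - m4)(x1 - x3) = 0, contradiction
        apply aux_nz r l2.1 l4.1 p1.1 p3.1 hm hx
        have e1 : l2.2 - l4.2 = -((l2.1.val : ZMod (r*r+1)) - l4.1.val) * p1.1.val := by
          have := h1.symm.trans h4; linear_combination this
        have e2 : l2.2 - l4.2 = -((l2.1.val : ZMod (r*r+1)) - l4.1.val) * p3.1.val := by
          have := h2.symm.trans h3; linear_combination this
        have := e1.symm.trans e2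
        linear_combination -this
  rintro (a|a) (b|b) (c|c) (d|d) h1 h2 h3 h4 hac hbd <;>
    first
    | exact h1 | exact h2 | exact h3 | exact h4
    | exact main a b c d h1 h2 h3 h4 (fun h => hac (congrArg Sum.inl h)) (fun h => hbd (congrArg Sum.inr h))
    | exact main b c d a h2 h3 h4 h1 (fun h => hbd (congrArg Sum.inl h)) (fun h => hac (congrArg Sum.inr h.symm))

lemma Gr_deg (r : ℕ) : ∀ v, ((Gr r).neighborSet v).ncard = r := by
  have hinj_l : ∀ y x : ZMod (r*r+1), Function.Injective
      (fun m : Fin r => (Sum.inr (m, y - (m.val : ZMod (r*r+1)) * x) : Vt r)) := by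
    intro y x m m' h
    simp only [Sum.inr.injEq, Prod.mk.injEq] at h
    have := h.1
    exact this
  rintro (⟨x, y⟩ | ⟨m, b⟩)
  · have : (Gr r).neighborSet (Sum.inl (x, y)) =
        (fun m : Fin r => (Sum.inr (m, y - (m.val : ZMod (r*r+1)) * x.val) : Vt r)) '' Set.univ := by
      ext v
      cases v with
      | inl p => simp [SimpleGraph.neighborSet, Gr_adj_pp]
      | inr l =>
        obtain ⟨m2, b2⟩ := l
        simp only [SimpleGraph.mem_neighborSet, Gr_adj_pl, Set.image_univ, Set.mem_range,
          Sum.inr.injEq, Prod.mk.injEq]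
        constructor
        · intro h
          exact ⟨m2, rfl, by rw [h]; ring⟩
        · rintro ⟨m, rfl, rfl⟩
          ring
    rw [this, Set.ncard_image_of_injective _ (hinj_l y x.val), Set.ncard_univ]
    simp
  · have : (Gr r).neighborSet (Sum.inr (m, b)) =
        (fun x : Fin r => (Sum.inl (x, (m.val : ZMod (r*r+1)) * x.val + b) : Vt r)) '' Set.univ := by
      ext v
      cases v with
      | inr l => simp [SimpleGraph.neighborSet, Gr_adj_ll]
      | inl p =>
        obtain ⟨x1, y1⟩ := p
        simp only [SimpleGraph.mem_neighborSet, Gr_adj_lp, Set.image_univ, Set.mem_range,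
          Sum.inl.injEq, Prod.mk.injEq]
        constructor
        · intro h
          exact ⟨x1, rfl, h.symm⟩
        · rintro ⟨xx, rfl, rfl⟩
          rfl
    rw [this, Set.ncard_image_of_injective _ ?_, Set.ncard_univ]
    · simp
    · intro a a' h
      simp only [Sum.inl.injEq, Prod.mk.injEq] at h
      exact h.1

/-- for every even `r ≥ 2` there exists an `r`-regular graph of
girth at least `5`. -/
theorem stmt12 (r : ℕ) (hr : 2 ≤ r) (heven : Even r) :
    ∃ (n : ℕ) (G : SimpleGraph (Fin n)),
      (∀ v, (G.neighborSet v).ncard = r) ∧ 5 ≤ G.egirth := by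
  classical
  set N := Fintype.card (Vt r) with hN
  let e : Vt r ≃ Fin N := Fintype.equivFin (Vt r)
  refine ⟨N, ⟨fun a b => (Gr r).Adj (e.symm a) (e.symm b),
      ⟨fun a b h => (Gr r).adj_symm h⟩, ⟨fun a h => (Gr r).irrefl h⟩⟩, ?_, ?_⟩
  · intro v
    have himg : {b | (Gr r).Adj (e.symm v) (e.symm b)} =
        ⇑e '' ((Gr r).neighborSet (e.symm v)) := by
      ext b
      constructor
      · intro h
        exact ⟨e.symm b, h, e.apply_symm_apply b⟩
      · rintro ⟨c, hc, rfl⟩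
        simpa [e.symm_apply_apply] using hc
    show {b | (Gr r).Adj (e.symm v) (e.symm b)}.ncard = r
    rw [himg, Set.ncard_image_of_injective _ e.injective]
    exact Gr_deg r _
  · apply aux_girth
    · intro a b c h1 h2 h3
      exact Gr_tri_free r _ _ _ h1 h2 h3
    · intro a b c d h1 h2 h3 h4 hac hbd
      exact Gr_c4_free r _ _ _ _ h1 h2 h3 h4
        (fun h => hac (e.symm.injective h)) (fun h => hbd (e.symm.injective h))
end

section
/- For every Δ ≥ 2 there exists a connected graph G with maximum degree Δ whose degeneracy is ⌊Δ/2⌋: namely, attach ⌈Δ/2⌉ leaves to every vertex of the complete bipartite graph K_{⌊Δ/2⌋,⌊Δ/2⌋}. This graph has maximum degree exactly Δ and every subgraph of minimum degree ≥ 2 lies inside the K_{⌊Δ/2⌋,⌊Δ/2⌋} core. -/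
noncomputable def degeneracy {V : Type*} (G : SimpleGraph V) : ℕ :=
  sSup {d | ∃ H : G.Subgraph, H.verts.Nonempty ∧ ∀ v ∈ H.verts, d ≤ (H.neighborSet v).ncard}

/-!
A leaf has degree `1`, so a subgraph of minimum degree at least `2` contains no leaf, and
each of its vertices keeps at most its `H`-neighbours. Hence every subgraph of minimum degree
`> 1` has minimum degree at most `k` when `H` is `k`-regular, while `H` itself, as the core,
is a subgraph of minimum degree `k`. For `H = K_{k,k}` the core vertices have degree
`k + ℓ = Δ` and the leaves degree `1`.
-/

open SimpleGraph Set Sum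

section completeBipartite

variable {V W : Type*}

lemma completeBipartiteGraph_neighborSet_inl (a : V) :
    (completeBipartiteGraph V W).neighborSet (inl a) = range inr := by
  ext (_ | _) <;> simp

lemma completeBipartiteGraph_neighborSet_inr (b : W) :
    (completeBipartiteGraph V W).neighborSet (inr b) = range inl := by
  ext (_ | _) <;> simp

lemma completeBipartiteGraph_connected [Nonempty V] [Nonempty W] :
    (completeBipartiteGraph V W).Connected := by
  obtain ⟨a⟩ := ‹Nonempty V›
  obtain ⟨b⟩ := ‹Nonempty W›
  have reach_inr (b' : W) : (completeBipartiteGraph V W).Reachable (inl a) (inr b') :=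
    Adj.reachable (by simp)
  refine (connected_iff_exists_forall_reachable _).2 ⟨inl a, ?_⟩
  rintro (a' | b')
  · exact (reach_inr b).trans (Adj.reachable (by simp))
  · exact reach_inr b'

lemma ncard_neighborSet_completeBipartiteGraph_self (k : ℕ) (v : Fin k ⊕ Fin k) :
    ((completeBipartiteGraph (Fin k) (Fin k)).neighborSet v).ncard = k := by
  rcases v with a | b
  · rw [completeBipartiteGraph_neighborSet_inl, ncard_range_of_injective inr_injective,
      Nat.card_fin]
  · rw [completeBipartiteGraph_neighborSet_inr, ncard_range_of_injective inl_injective,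
      Nat.card_fin]

end completeBipartite

namespace attachLeaves

variable {V : Type*} {H : SimpleGraph V} {ℓ : ℕ}

@[simp]
lemma adj_inl_inl {u v : V} : (attachLeaves H ℓ).Adj (inl u) (inl v) ↔ H.Adj u v := by
  simp only [attachLeaves, fromRel_adj, ne_eq, inl.injEq]
  exact ⟨fun ⟨_, h⟩ => h.elim id Adj.symm, fun h => ⟨h.ne, .inl h⟩⟩

@[simp]
lemma adj_inl_inr {u : V} {w : V × Fin ℓ} :
    (attachLeaves H ℓ).Adj (inl u) (inr w) ↔ u = w.1 := by
  simp [attachLeaves]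

@[simp]
lemma adj_inr_inl {u : V} {w : V × Fin ℓ} :
    (attachLeaves H ℓ).Adj (inr w) (inl u) ↔ w.1 = u := by
  rw [adj_comm, adj_inl_inr, eq_comm]

@[simp]
lemma not_adj_inr_inr {w w' : V × Fin ℓ} : ¬ (attachLeaves H ℓ).Adj (inr w) (inr w') := by
  simp [attachLeaves]

lemma neighborSet_inr (w : V × Fin ℓ) :
    (attachLeaves H ℓ).neighborSet (inr w) = {inl w.1} := by
  ext (_ | _) <;> simp [eq_comm]

lemma neighborSet_inl (u : V) :
    (attachLeaves H ℓ).neighborSet (inl u) =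
      inl '' H.neighborSet u ∪ inr '' (Prod.mk u '' univ) := by
  ext (_ | ⟨u', i⟩) <;> simp [eq_comm]

lemma ncard_neighborSet_inr (w : V × Fin ℓ) :
    ((attachLeaves H ℓ).neighborSet (inr w)).ncard = 1 := by
  rw [neighborSet_inr, ncard_singleton]

lemma ncard_neighborSet_inl {u : V} (hu : (H.neighborSet u).Finite) :
    ((attachLeaves H ℓ).neighborSet (inl u)).ncard = (H.neighborSet u).ncard + ℓ := by
  have hdisj : Disjoint (inl '' H.neighborSet u) (inr '' (Prod.mk u '' univ) : Set (V ⊕ V × Fin ℓ)) :=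
    disjoint_left.2 (by rintro _ ⟨_, -, rfl⟩ ⟨_, -, h⟩; cases h)
  rw [neighborSet_inl, ncard_union_eq hdisj (hu.image _) (toFinite _),
    ncard_image_of_injective _ inl_injective, ncard_image_of_injective _ inr_injective,
    ncard_image_of_injective _ (Prod.mk_right_injective u), ncard_univ, Nat.card_fin]

lemma neighborSet_inl_inter_range_inl (u : V) :
    (attachLeaves H ℓ).neighborSet (inl u) ∩ range inl = inl '' H.neighborSet u := by
  ext (_ | _) <;> simp

def coreHom : H →g attachLeaves H ℓ where
  toFun := inl
  map_rel' := adj_inl_inl.2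

lemma connected (hH : H.Connected) : (attachLeaves H ℓ).Connected := by
  obtain ⟨u⟩ := hH.nonempty
  refine (connected_iff_exists_forall_reachable _).2 ⟨inl u, ?_⟩
  rintro (v | w)
  · exact (hH u v).map coreHom
  · exact ((hH u w.1).map coreHom).trans (Adj.reachable (adj_inl_inr.2 rfl))

lemma exists_eq_inl_of_two_le_ncard {H' : (attachLeaves H ℓ).Subgraph}
    (hmin : ∀ v ∈ H'.verts, 2 ≤ (H'.neighborSet v).ncard) {v : V ⊕ V × Fin ℓ}
    (hv : v ∈ H'.verts) : ∃ u, v = inl u := by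
  rcases v with u | w
  · exact ⟨u, rfl⟩
  · have hle : (H'.neighborSet (inr w)).ncard ≤ 1 := by
      rw [← ncard_neighborSet_inr (H := H) w]
      exact ncard_le_ncard (H'.neighborSet_subset _) (by simp [neighborSet_inr])
    exact absurd (hmin _ hv) (by omega)

lemma ncard_subgraph_neighborSet_inl_le {H' : (attachLeaves H ℓ).Subgraph}
    (hmin : ∀ v ∈ H'.verts, 2 ≤ (H'.neighborSet v).ncard) {u : V}
    (hu : (H.neighborSet u).Finite) :
    (H'.neighborSet (inl u)).ncard ≤ (H.neighborSet u).ncard := by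
  have hsub : H'.neighborSet (inl u) ⊆ inl '' H.neighborSet u := by
    rw [← neighborSet_inl_inter_range_inl (ℓ := ℓ)]
    intro x hx
    obtain ⟨y, rfl⟩ := exists_eq_inl_of_two_le_ncard hmin (H'.edge_vert (H'.adj_symm hx))
    exact ⟨H'.neighborSet_subset _ hx, y, rfl⟩
  exact (ncard_le_ncard hsub (hu.image _)).trans_eq (ncard_image_of_injective _ inl_injective)

lemma ncard_core_neighborSet (u : V) :
    (((⊤ : (attachLeaves H ℓ).Subgraph).induce (range inl)).neighborSet (inl u)).ncard =
      (H.neighborSet u).ncard := by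
  have hcore : ((⊤ : (attachLeaves H ℓ).Subgraph).induce (range inl)).neighborSet (inl u) =
      (attachLeaves H ℓ).neighborSet (inl u) ∩ range inl := by
    ext x
    simp [and_comm]
  rw [hcore, neighborSet_inl_inter_range_inl, ncard_image_of_injective _ inl_injective]

variable {k : ℕ}

lemma ncard_neighborSet_inl_of_regular (hk : 1 ≤ k) (hreg : ∀ u, (H.neighborSet u).ncard = k)
    (u : V) : ((attachLeaves H ℓ).neighborSet (inl u)).ncard = k + ℓ := by
  rw [ncard_neighborSet_inl (finite_of_ncard_pos (by rw [hreg]; omega)), hreg]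

lemma ncard_neighborSet_le (hk : 1 ≤ k) (hreg : ∀ u, (H.neighborSet u).ncard = k)
    (v : V ⊕ V × Fin ℓ) : ((attachLeaves H ℓ).neighborSet v).ncard ≤ k + ℓ := by
  rcases v with u | w
  · exact (ncard_neighborSet_inl_of_regular hk hreg u).le
  · rw [ncard_neighborSet_inr]
    omega

theorem degeneracy_eq [Nonempty V] (hk : 1 ≤ k) (hreg : ∀ u, (H.neighborSet u).ncard = k) :
    degeneracy (attachLeaves H ℓ) = k := by
  obtain ⟨u₀⟩ := ‹Nonempty V›
  refine IsGreatest.csSup_eq ⟨⟨(⊤ : (attachLeaves H ℓ).Subgraph).induce (range inl),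
    ⟨inl u₀, u₀, rfl⟩, ?_⟩, ?_⟩
  · rintro _ ⟨u, rfl⟩
    rw [ncard_core_neighborSet, hreg]
  · rintro d ⟨H', ⟨v, hv⟩, hmin⟩
    rcases le_or_gt d 1 with hd | hd
    · omega
    have hmin2 : ∀ v ∈ H'.verts, 2 ≤ (H'.neighborSet v).ncard :=
      fun v hv => hd.trans_le (hmin v hv)
    obtain ⟨u, rfl⟩ := exists_eq_inl_of_two_le_ncard hmin2 hv
    calc d ≤ (H'.neighborSet (inl u)).ncard := hmin _ hv
      _ ≤ (H.neighborSet u).ncard :=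
        ncard_subgraph_neighborSet_inl_le hmin2 (finite_of_ncard_pos (by rw [hreg]; omega))
      _ = k := hreg u

end attachLeaves

/-- for every `Δ ≥ 2`, attaching `⌈Δ/2⌉` leaves to every vertex of
`K_{⌊Δ/2⌋,⌊Δ/2⌋}` yields a connected graph of maximum degree exactly `Δ` and
degeneracy `⌊Δ/2⌋`, in which every subgraph of minimum degree at least `2` lies
inside the `K_{⌊Δ/2⌋,⌊Δ/2⌋}` core. -/
theorem stmt19 (Δ : ℕ) (hΔ : 2 ≤ Δ) :
    (attachLeaves (completeBipartiteGraph (Fin (Δ / 2)) (Fin (Δ / 2))) ((Δ + 1) / 2)).Connected ∧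
    (∀ v, ((attachLeaves (completeBipartiteGraph (Fin (Δ / 2)) (Fin (Δ / 2)))
      ((Δ + 1) / 2)).neighborSet v).ncard ≤ Δ) ∧
    (∃ v, ((attachLeaves (completeBipartiteGraph (Fin (Δ / 2)) (Fin (Δ / 2)))
      ((Δ + 1) / 2)).neighborSet v).ncard = Δ) ∧
    degeneracy (attachLeaves (completeBipartiteGraph (Fin (Δ / 2)) (Fin (Δ / 2)))
      ((Δ + 1) / 2)) = Δ / 2 ∧
    (∀ H' : (attachLeaves (completeBipartiteGraph (Fin (Δ / 2)) (Fin (Δ / 2)))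
        ((Δ + 1) / 2)).Subgraph,
      (∀ v ∈ H'.verts, 2 ≤ (H'.neighborSet v).ncard) →
      ∀ v ∈ H'.verts, ∃ u, v = Sum.inl u) := by
  have hk : 1 ≤ Δ / 2 := by omega
  have hΔ_eq : Δ / 2 + (Δ + 1) / 2 = Δ := by omega
  have : Nonempty (Fin (Δ / 2)) := ⟨⟨0, hk⟩⟩
  have hreg := ncard_neighborSet_completeBipartiteGraph_self (Δ / 2)
  refine ⟨attachLeaves.connected completeBipartiteGraph_connected, fun v => ?_,
    ⟨inl (inl ⟨0, hk⟩), ?_⟩, attachLeaves.degeneracy_eq hk hreg,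
    fun _ hmin _ hv => attachLeaves.exists_eq_inl_of_two_le_ncard hmin hv⟩
  · exact (attachLeaves.ncard_neighborSet_le hk hreg v).trans_eq hΔ_eq
  · exact (attachLeaves.ncard_neighborSet_inl_of_regular hk hreg _).trans hΔ_eq
end
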